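/- Let A = (a_x)_{x∈X} and B = (b_x)_{x∈X} be measurements on a state space S, let λ ∈ (0,1], and let C = λA + (1−λ)B be their probabilistic mixture, i.e., C = (λ a_x + (1−λ) b_x)_{x∈X}. If C is α-intersubjective, then A is (1 − (1−α)/λ)-intersubjective. -/

import Mathlib

open Finset

/-- An effect on the state space `S`: an affine map taking values in `[0,1]` on `S`. -/
def IsEffect {V : Type*} [AddCommGroup V] [Module ℝ V] (S : Set V) (a : V →ᵃ[ℝ] ℝ) : Prop :=
  ∀ s ∈ S, 0 ≤ a s ∧ a s ≤ 1

/-- A finite-outcome measurement: a family of effects summing to the unit effect on `S`. -/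
def IsMeasurement {V : Type*} [AddCommGroup V] [Module ℝ V] (S : Set V) {X : Type*} [Fintype X]
    (A : X → (V →ᵃ[ℝ] ℝ)) : Prop :=
  (∀ x, IsEffect S (A x)) ∧ ∀ s ∈ S, ∑ x, A x s = 1

/-- A joint measurement of `A` and `B`: a measurement on `X × Y` whose marginals are `A`, `B`. -/
def IsJointMeasurement {V : Type*} [AddCommGroup V] [Module ℝ V] (S : Set V)
    {X Y : Type*} [Fintype X] [Fintype Y]
    (A : X → (V →ᵃ[ℝ] ℝ)) (B : Y → (V →ᵃ[ℝ] ℝ)) (C : X × Y → (V →ᵃ[ℝ] ℝ)) : Prop :=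
  IsMeasurement S C ∧ (∀ x, ∀ s ∈ S, ∑ y, C (x, y) s = A x s) ∧
    (∀ y, ∀ s ∈ S, ∑ x, C (x, y) s = B y s)

/-- `A` is `α`-intersubjective: every joint measurement of `A` with itself has diagonal
weight at least `α · 1_S`. -/
def Intersubjective {V : Type*} [AddCommGroup V] [Module ℝ V] (S : Set V) {X : Type*} [Fintype X]
    (α : ℝ) (A : X → (V →ᵃ[ℝ] ℝ)) : Prop :=
  ∀ C : X × X → (V →ᵃ[ℝ] ℝ), IsJointMeasurement S A A C → ∀ s ∈ S, α ≤ ∑ x, C (x, x) s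

/-- `A` is `α`-sharp: for distinct outcomes `x ≠ x'`, any effect below both `A x` and `A x'`
is below `(1 - α) · 1_S`. -/
def SharpMeasurement {V : Type*} [AddCommGroup V] [Module ℝ V] (S : Set V) {X : Type*} [Fintype X]
    (α : ℝ) (A : X → (V →ᵃ[ℝ] ℝ)) : Prop :=
  ∀ x x', x ≠ x' → ∀ b : V →ᵃ[ℝ] ℝ, IsEffect S b → (∀ s ∈ S, b s ≤ A x s) →
    (∀ s ∈ S, b s ≤ A x' s) → ∀ s ∈ S, b s ≤ 1 - α


/-!
Given a joint measurement `D` of `A` with itself, mix it with the perfectly correlated joint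
measurement of `B` with itself (weight `B x` on `(x, x)`). The result is a joint measurement of
`C` with itself whose diagonal weight is `λ · ∑ₓ D (x, x) + (1 - λ)`, so `α`-intersubjectivity
of `C` bounds it below by `α`.
-/

section

variable {V : Type*} [AddCommGroup V] [Module ℝ V] {S : Set V}

theorem IsEffect.convex_comb {a b : V →ᵃ[ℝ] ℝ} (ha : IsEffect S a) (hb : IsEffect S b)
    {t u : ℝ} (ht : 0 ≤ t) (hu : 0 ≤ u) (htu : t + u = 1) : IsEffect S (t • a + u • b) := by
  intro s hs
  obtain ⟨ha0, ha1⟩ := ha s hs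
  obtain ⟨hb0, hb1⟩ := hb s hs
  simp only [AffineMap.coe_add, AffineMap.coe_smul, Pi.add_apply, Pi.smul_apply, smul_eq_mul]
  constructor <;> nlinarith

theorem sum_convex_comb_apply {X : Type*} [Fintype X] (A B : X → (V →ᵃ[ℝ] ℝ)) (t u : ℝ)
    (s : V) : ∑ x, (t • A x + u • B x) s = t * ∑ x, A x s + u * ∑ x, B x s := by
  simp only [AffineMap.coe_add, AffineMap.coe_smul, Pi.add_apply, Pi.smul_apply, smul_eq_mul,
    sum_add_distrib, mul_sum]

theorem IsMeasurement.convex_comb {X : Type*} [Fintype X] {A B : X → (V →ᵃ[ℝ] ℝ)}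
    (hA : IsMeasurement S A) (hB : IsMeasurement S B) {t u : ℝ} (ht : 0 ≤ t) (hu : 0 ≤ u)
    (htu : t + u = 1) : IsMeasurement S (fun x => t • A x + u • B x) := by
  refine ⟨fun x => (hA.1 x).convex_comb (hB.1 x) ht hu htu, fun s hs => ?_⟩
  rw [sum_convex_comb_apply, hA.2 s hs, hB.2 s hs, mul_one, mul_one, htu]

theorem IsJointMeasurement.convex_comb {X Y : Type*} [Fintype X] [Fintype Y]
    {A A' : X → (V →ᵃ[ℝ] ℝ)} {B B' : Y → (V →ᵃ[ℝ] ℝ)} {D D' : X × Y → (V →ᵃ[ℝ] ℝ)}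
    (hD : IsJointMeasurement S A B D) (hD' : IsJointMeasurement S A' B' D')
    {t u : ℝ} (ht : 0 ≤ t) (hu : 0 ≤ u) (htu : t + u = 1) :
    IsJointMeasurement S (fun x => t • A x + u • A' x) (fun y => t • B y + u • B' y)
      (fun p => t • D p + u • D' p) := by
  refine ⟨hD.1.convex_comb hD'.1 ht hu htu, fun x s hs => ?_, fun y s hs => ?_⟩
  · rw [sum_convex_comb_apply (fun y => D (x, y)) (fun y => D' (x, y)), hD.2.1 x s hs,
      hD'.2.1 x s hs]
    simp [smul_eq_mul]
  · rw [sum_convex_comb_apply (fun x => D (x, y)) (fun x => D' (x, y)), hD.2.2 y s hs,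
      hD'.2.2 y s hs]
    simp [smul_eq_mul]

def diagonalJoint {X : Type*} [DecidableEq X] (A : X → (V →ᵃ[ℝ] ℝ)) :
    X × X → (V →ᵃ[ℝ] ℝ) :=
  fun p => if p.1 = p.2 then A p.1 else 0

theorem sum_diagonalJoint_left {X : Type*} [Fintype X] [DecidableEq X]
    (A : X → (V →ᵃ[ℝ] ℝ)) (x : X) (s : V) : ∑ y, diagonalJoint A (x, y) s = A x s := by
  simp [diagonalJoint, apply_ite (fun a : V →ᵃ[ℝ] ℝ => a s)]

theorem sum_diagonalJoint_right {X : Type*} [Fintype X] [DecidableEq X]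
    (A : X → (V →ᵃ[ℝ] ℝ)) (y : X) (s : V) : ∑ x, diagonalJoint A (x, y) s = A y s := by
  simp [diagonalJoint, apply_ite (fun a : V →ᵃ[ℝ] ℝ => a s)]

theorem sum_diagonalJoint_diag {X : Type*} [Fintype X] [DecidableEq X]
    (A : X → (V →ᵃ[ℝ] ℝ)) (s : V) : ∑ x, diagonalJoint A (x, x) s = ∑ x, A x s := by
  simp [diagonalJoint]

theorem IsMeasurement.isJointMeasurement_diagonalJoint {X : Type*} [Fintype X] [DecidableEq X]
    {A : X → (V →ᵃ[ℝ] ℝ)} (hA : IsMeasurement S A) :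
    IsJointMeasurement S A A (diagonalJoint A) := by
  refine ⟨⟨fun p s hs => ?_, fun s hs => ?_⟩, fun x s _ => sum_diagonalJoint_left A x s,
    fun y s _ => sum_diagonalJoint_right A y s⟩
  · by_cases h : p.1 = p.2
    · simpa [diagonalJoint, h] using hA.1 p.2 s hs
    · simp [diagonalJoint, h]
  · rw [Fintype.sum_prod_type]
    simp only [sum_diagonalJoint_left]
    exact hA.2 s hs

end

theorem mixture_intersubjective {V : Type*} [NormedAddCommGroup V] [NormedSpace ℝ V]
    (S : Set V)
    {X : Type*} [Fintype X] (A B C : X → (V →ᵃ[ℝ] ℝ))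
    (hB : IsMeasurement S B)
    (l : ℝ) (hl : l ∈ Set.Ioc (0 : ℝ) 1)
    (hmix : ∀ x, C x = l • A x + (1 - l) • B x)
    (α : ℝ) (hC : Intersubjective S α C) :
    Intersubjective S (1 - (1 - α) / l) A := by
  classical
  obtain ⟨hl0, hl1⟩ := hl
  intro D hD s hs
  have hjoint := hD.convex_comb hB.isJointMeasurement_diagonalJoint hl0.le (sub_nonneg.2 hl1)
    (add_sub_cancel l 1)
  rw [← funext hmix] at hjoint
  have hdiag := hC _ hjoint s hs
  rw [sum_convex_comb_apply (fun x => D (x, x)) (fun x => diagonalJoint B (x, x)),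
    sum_diagonalJoint_diag, hB.2 s hs] at hdiag
  rw [sub_le_iff_le_add, ← sub_le_iff_le_add', le_div_iff₀ hl0]
  linarith
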